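/- arXiv:0909.4453 — 7 statements merged into one kernel-verified Lean document; each statement's English description precedes it below -/
import Mathlib

section
/- Let P be a nonempty subset of X = Σ i, G i. Then the set {(y, z) ∈ X × X | ∃ x ∈ P, δ x (y, z)} equals the Cartesian product P × P if and only if there exists an index i such that P = {⟨i, g⟩ | g ∈ G i}, i.e., P is exactly one fiber of the sigma type. (The classical points of a classical structure in Rel are exactly the parts of its partition.) -/
/-- The comultiplication of the classical structure on `Σ i, G i` determined by the
partition into fibers together with the group structures `G i`:
`⟨i, g⟩` is related to `(⟨j, h⟩, ⟨k, l⟩)` iff `i = j`, `i = k` and `g = h * l`. -/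
def relDelta {ι : Type*} {G : ι → Type*} [∀ i, CommGroup (G i)]
    (x : Σ i, G i) (yz : (Σ i, G i) × (Σ i, G i)) : Prop :=
  ∃ h l : G x.1, yz.1 = ⟨x.1, h⟩ ∧ yz.2 = ⟨x.1, l⟩ ∧ x.2 = h * l

/-!
If `δ ∘ P = P × P`, then for `⟨i₀, g₀⟩ ∈ P` every pair in `P × P` comes from one point of `P`,
so all of `P` lies in the fiber over `i₀`; conversely every `⟨i₀, h⟩` is the first half of the
splitting `g₀ = h * (h⁻¹ * g₀)`, hence lies in `P`. The fiber itself is a classical point since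
every element of a group is a product.
-/

namespace relDelta

variable {ι : Type*} {G : ι → Type*} [∀ i, CommGroup (G i)]

theorem fst_fst_eq {x : Σ i, G i} {yz : (Σ i, G i) × (Σ i, G i)} (h : relDelta x yz) :
    yz.1.1 = x.1 := by
  obtain ⟨a, b, h₁, -, -⟩ := h
  rw [h₁]

theorem snd_fst_eq {x : Σ i, G i} {yz : (Σ i, G i) × (Σ i, G i)} (h : relDelta x yz) :
    yz.2.1 = x.1 := by
  obtain ⟨a, b, -, h₂, -⟩ := h
  rw [h₂]

theorem mk_mul (i : ι) (h l : G i) : relDelta ⟨i, h * l⟩ (⟨i, h⟩, ⟨i, l⟩) :=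
  ⟨h, l, rfl, rfl, rfl⟩

end relDelta

section ClassicalPoint

variable {ι : Type*} {G : ι → Type*} [∀ i, CommGroup (G i)] {P : Set (Σ i, G i)}

theorem fst_eq_of_relDelta_image_eq_prod
    (hP : {yz | ∃ x ∈ P, relDelta x yz} = P ×ˢ P) {y z : Σ i, G i} (hy : y ∈ P) (hz : z ∈ P) :
    y.1 = z.1 := by
  have hyz : (y, z) ∈ {yz | ∃ x ∈ P, relDelta x yz} := hP ▸ ⟨hy, hz⟩
  obtain ⟨x, -, hx⟩ := hyz
  exact hx.fst_fst_eq.trans hx.snd_fst_eq.symm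

theorem mem_of_relDelta_image_eq_prod
    (hP : {yz | ∃ x ∈ P, relDelta x yz} = P ×ˢ P) {i : ι} {g : G i} (hg : ⟨i, g⟩ ∈ P)
    (h : G i) : ⟨i, h⟩ ∈ P := by
  have hsplit : ((⟨i, h⟩, ⟨i, h⁻¹ * g⟩) : (Σ i, G i) × (Σ i, G i)) ∈ P ×ˢ P :=
    hP ▸ ⟨⟨i, h * (h⁻¹ * g)⟩, by rwa [mul_inv_cancel_left], relDelta.mk_mul i h _⟩
  exact hsplit.1

theorem eq_fiber_of_relDelta_image_eq_prod
    (hP : {yz | ∃ x ∈ P, relDelta x yz} = P ×ˢ P) {x₀ : Σ i, G i} (hx₀ : x₀ ∈ P) :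
    P = {x | x.1 = x₀.1} := by
  ext ⟨i, g⟩
  refine ⟨fun hx ↦ fst_eq_of_relDelta_image_eq_prod hP hx hx₀, ?_⟩
  rintro (rfl : i = x₀.1)
  exact mem_of_relDelta_image_eq_prod hP hx₀ g

theorem relDelta_image_fiber (i₀ : ι) :
    {yz | ∃ x ∈ {x : Σ i, G i | x.1 = i₀}, relDelta x yz} =
      {x : Σ i, G i | x.1 = i₀} ×ˢ {x : Σ i, G i | x.1 = i₀} := by
  ext ⟨⟨j, h⟩, ⟨k, l⟩⟩
  constructor
  · rintro ⟨x, hx, hδ⟩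
    exact ⟨hδ.fst_fst_eq.trans hx, hδ.snd_fst_eq.trans hx⟩
  · rintro ⟨rfl : j = i₀, rfl : k = j⟩
    exact ⟨⟨_, h * l⟩, rfl, relDelta.mk_mul _ h l⟩

end ClassicalPoint

theorem classical_points_are_fibers_general {ι : Type*}
    (G : ι → Type*) [∀ i, CommGroup (G i)]
    (P : Set (Σ i, G i)) (hP : P.Nonempty) :
    {yz : (Σ i, G i) × (Σ i, G i) | ∃ x ∈ P, relDelta x yz} = P ×ˢ P ↔
      ∃ i₀ : ι, P = {x : Σ i, G i | x.1 = i₀} := by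
  constructor
  · intro hδ
    obtain ⟨x₀, hx₀⟩ := hP
    exact ⟨x₀.1, eq_fiber_of_relDelta_image_eq_prod hδ hx₀⟩
  · rintro ⟨i₀, rfl⟩
    exact relDelta_image_fiber i₀

/-- The classical points of a classical structure in `Rel` are exactly the parts of its
partition: a nonempty `P ⊆ Σ i, G i` satisfies `δ ∘ P = P ⊗ P` iff `P` is one fiber. -/
theorem classical_points_are_fibers {ι : Type*} [Fintype ι] [Nonempty ι]
    (G : ι → Type*) [∀ i, Fintype (G i)] [∀ i, CommGroup (G i)]
    (P : Set (Σ i, G i)) (hP : P.Nonempty) :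
    {yz : (Σ i, G i) × (Σ i, G i) | ∃ x ∈ P, relDelta x yz} = P ×ˢ P ↔
      ∃ i₀ : ι, P = {x : Σ i, G i | x.1 = i₀} :=
  classical_points_are_fibers_general G P hP
end

section
/- Let P be a subset of X = Σ i, G i. Then the relation R on X defined by R x y ⇔ (∃ z ∈ P, δ x (y, z)) is the graph of a bijection X → X if and only if for every index i there is exactly one g ∈ G i with ⟨i, g⟩ ∈ P, i.e., P is a transversal of the fibers. (The unbiased points of a classical structure in Rel are exactly the sets obtained by taking one element from each part of its partition, independently of the chosen group structures.) -/
/-!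
`Λ(P)` relates `⟨i, a⟩` exactly to the points `⟨i, a * l⁻¹⟩` with `⟨i, l⟩ ∈ P`. It is therefore
a function iff every fiber of `P` is a singleton `{g i}`, and then it is the bijection
`⟨i, a⟩ ↦ ⟨i, a * (g i)⁻¹⟩`, fiberwise translation by `(g i)⁻¹`.
-/

/-- The paper's `Λ(P)`. -/
def relLambda {ι : Type*} {G : ι → Type*} [∀ i, CommGroup (G i)] (P : Set (Σ i, G i))
    (x y : Σ i, G i) : Prop :=
  ∃ z ∈ P, relDelta x (y, z)

section

variable {ι : Type*} {G : ι → Type*} [∀ i, CommGroup (G i)]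

theorem relLambda_mk_iff (P : Set (Σ i, G i)) (i : ι) (a : G i) (y : Σ i, G i) :
    relLambda P ⟨i, a⟩ y ↔ ∃ l : G i, (⟨i, l⟩ : Σ i, G i) ∈ P ∧ y = ⟨i, a * l⁻¹⟩ := by
  constructor
  · rintro ⟨_, hz, h, l, rfl, rfl, ha⟩
    exact ⟨l, hz, by simp [show a = h * l from ha]⟩
  · rintro ⟨l, hl, rfl⟩
    exact ⟨⟨i, l⟩, hl, a * l⁻¹, l, rfl, rfl, by simp⟩

theorem relLambda_mk_iff_of_fiber_eq {P : Set (Σ i, G i)} {i : ι} {g : G i}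
    (hP : ∀ l : G i, (⟨i, l⟩ : Σ i, G i) ∈ P ↔ l = g) (a : G i) (y : Σ i, G i) :
    relLambda P ⟨i, a⟩ y ↔ (⟨i, a * g⁻¹⟩ : Σ i, G i) = y := by
  simp only [relLambda_mk_iff, hP, exists_eq_left, eq_comm (a := y)]

/-- For `⟨i, l⟩, ⟨i, l'⟩ ∈ P`, the point `f ⟨i, l⟩` is both `⟨i, 1⟩` and `⟨i, l * l'⁻¹⟩`. -/
theorem existsUnique_mem_of_relLambda_iff {P : Set (Σ i, G i)} (f : (Σ i, G i) → Σ i, G i)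
    (hf : ∀ x y, relLambda P x y ↔ f x = y) (i : ι) :
    ∃! l : G i, (⟨i, l⟩ : Σ i, G i) ∈ P := by
  obtain ⟨l, hl, -⟩ := (relLambda_mk_iff P i 1 _).1 ((hf _ _).2 rfl)
  refine ⟨l, hl, fun l' hl' => ?_⟩
  have h_one : f ⟨i, l⟩ = ⟨i, 1⟩ := (hf _ _).1 ((relLambda_mk_iff P i l _).2 ⟨l, hl, by simp⟩)
  have h_quot : f ⟨i, l⟩ = ⟨i, l * l'⁻¹⟩ :=
    (hf _ _).1 ((relLambda_mk_iff P i l _).2 ⟨l', hl', rfl⟩)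
  have : (1 : G i) = l * l'⁻¹ := by simpa using h_one.symm.trans h_quot
  exact (mul_inv_eq_one.1 this.symm).symm

end

theorem unbiased_points_are_transversals_general {ι : Type*}
    (G : ι → Type*) [∀ i, CommGroup (G i)]
    (P : Set (Σ i, G i)) :
    (∃ f : (Σ i, G i) → (Σ i, G i), Function.Bijective f ∧
        ∀ x y : Σ i, G i, (∃ z ∈ P, relDelta x (y, z)) ↔ f x = y) ↔
      ∀ i : ι, ∃! g : G i, (⟨i, g⟩ : Σ i, G i) ∈ P := by
  constructor
  · rintro ⟨f, -, hf⟩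
    exact existsUnique_mem_of_relLambda_iff f hf
  · intro hP
    choose g hgP hg using hP
    refine ⟨Equiv.sigmaCongrRight fun i => Equiv.mulRight (g i)⁻¹, Equiv.bijective _, ?_⟩
    rintro ⟨i, a⟩ y
    exact relLambda_mk_iff_of_fiber_eq (fun l => ⟨hg i l, fun h => h ▸ hgP i⟩) a y

/-- The unbiased points of a classical structure in `Rel` are exactly the transversals of
its partition: the relation `Λ(P)`, `x ↦ {y | ∃ z ∈ P, δ x (y, z)}`, is the graph of a
bijection of `Σ i, G i` iff `P` picks exactly one element from each fiber. -/
theorem unbiased_points_are_transversals {ι : Type*} [Fintype ι] [Nonempty ι]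
    (G : ι → Type*) [∀ i, Fintype (G i)] [∀ i, CommGroup (G i)]
    (P : Set (Σ i, G i)) :
    (∃ f : (Σ i, G i) → (Σ i, G i), Function.Bijective f ∧
        ∀ x y : Σ i, G i, (∃ z ∈ P, relDelta x (y, z)) ↔ f x = y) ↔
      ∀ i : ι, ∃! g : G i, (⟨i, g⟩ : Σ i, G i) ∈ P :=
  unbiased_points_are_transversals_general G P
end

section
/- Let X be a finite nonempty set and let π be a uniform partition of X. Then there exists a partition τ of X that is complementary to π. (Consequently, every classical structure in Rel whose partition is uniform has a complementary classical structure, obtained via the transpose partition.) -/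
/-- `π` is a partition of `X`: a collection of nonempty pairwise disjoint subsets of `X`
whose union is all of `X`. -/
def IsPartition {X : Type*} (π : Set (Set X)) : Prop :=
  (∀ S ∈ π, S.Nonempty) ∧ (∀ S ∈ π, ∀ T ∈ π, S ≠ T → Disjoint S T) ∧ ⋃₀ π = Set.univ

/-- Two partitions are complementary if every part of one meets every part of the other
in exactly one element. -/
def Complementary {X : Type*} (π τ : Set (Set X)) : Prop :=
  ∀ S ∈ π, ∀ T ∈ τ, ∃! x, x ∈ S ∩ T

/-!
Identify every part of the uniform partition `π` with `Fin n` and glue these identifications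
into one map `f : X → Fin n`. Then `f` is a bijection on each part, so each fibre of `f`
meets each part in exactly one point, and the fibres form the required partition `τ`.
-/

section

open Set Function

variable {X ι : Type*}

theorem IsPartition.exists_mem {π : Set (Set X)} (hπ : IsPartition π) (x : X) :
    ∃ S ∈ π, x ∈ S :=
  mem_sUnion.mp (hπ.2.2.symm ▸ mem_univ x)

theorem IsPartition.eq_of_mem {π : Set (Set X)} (hπ : IsPartition π) {S T : Set X}
    (hS : S ∈ π) (hT : T ∈ π) {x : X} (hxS : x ∈ S) (hxT : x ∈ T) : S = T := by
  by_contra hne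
  exact disjoint_left.mp (hπ.2.1 S hS T hT hne) hxS hxT

theorem bijOn_univ_of_domRestrict_bijective {f : X → ι} {S : Set X}
    (hf : Bijective (S.domRestrict f)) : BijOn f S univ :=
  ⟨mapsTo_univ f S, injOn_iff_injective.mpr hf.1, surjOn_iff_surjective.mpr hf.2⟩

theorem IsPartition.exists_bijOn_of_equiv {π : Set (Set X)} (hπ : IsPartition π)
    (e : ∀ S ∈ π, S ≃ ι) : ∃ f : X → ι, ∀ S ∈ π, BijOn f S univ := by
  choose P hP hxP using hπ.exists_mem
  refine ⟨fun x => e (P x) (hP x) ⟨x, hxP x⟩, fun S hS => ?_⟩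
  apply bijOn_univ_of_domRestrict_bijective
  have hrestrict : S.domRestrict (fun x => e (P x) (hP x) ⟨x, hxP x⟩) = e S hS := by
    funext ⟨x, hx⟩
    obtain rfl : P x = S := hπ.eq_of_mem (hP x) hS (hxP x) hx
    rfl
  exact hrestrict ▸ (e S hS).bijective

theorem isPartition_range_fibers {f : X → ι} (hf : Surjective f) :
    IsPartition (range fun i => f ⁻¹' {i}) := by
  refine ⟨?_, ?_, ?_⟩
  · rintro _ ⟨i, rfl⟩
    exact (hf i).imp fun x hx => hx
  · rintro _ ⟨i, rfl⟩ _ ⟨j, rfl⟩ hij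
    have hne : i ≠ j := fun h => hij (h ▸ rfl)
    exact (disjoint_singleton.mpr hne).preimage f
  · exact sUnion_eq_univ_iff.mpr fun x => ⟨_, ⟨f x, rfl⟩, rfl⟩

theorem complementary_range_fibers {π : Set (Set X)} {f : X → ι}
    (hf : ∀ S ∈ π, BijOn f S univ) : Complementary π (range fun i => f ⁻¹' {i}) := by
  rintro S hS _ ⟨i, rfl⟩
  obtain ⟨x, hxS, rfl⟩ := (hf S hS).surjOn (mem_univ i)
  exact ⟨x, ⟨hxS, rfl⟩, fun y ⟨hyS, hy⟩ => (hf S hS).injOn hyS hxS hy⟩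

end

/-- Every uniform partition of a finite nonempty set has a complementary partition
(obtained via the transpose partition); hence every classical structure in `Rel` whose
partition is uniform has a complementary classical structure. -/
theorem uniform_partition_has_complementary {X : Type*} [Fintype X] [Nonempty X]
    (π : Set (Set X)) (hπ : IsPartition π)
    (huniform : ∀ S ∈ π, ∀ T ∈ π, S.ncard = T.ncard) :
    ∃ τ : Set (Set X), IsPartition τ ∧ Complementary π τ := by
  obtain ⟨S₀, hS₀, -⟩ := hπ.exists_mem (Classical.arbitrary X)
  have e : ∀ S ∈ π, S ≃ Fin S₀.ncard := fun S hS =>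
    (Finite.equivFin S).trans (finCongr (huniform S hS S₀ hS₀))
  obtain ⟨f, hf⟩ := hπ.exists_bijOn_of_equiv e
  have hsurj : Function.Surjective f := fun i =>
    ((hf S₀ hS₀).surjOn (Set.mem_univ i)).imp fun _ hx => hx.2
  exact ⟨_, isPartition_range_fibers hsurj, complementary_range_fibers hf⟩
end

section
/- Let X be a finite set and let π and τ be complementary partitions of X. Then every part of π has cardinality equal to the number of parts of τ; in particular π is uniform (and symmetrically every part of τ has cardinality equal to the number of parts of π, so τ is uniform). Consequently, a classical structure in Rel whose partition is not uniform has no complementary classical structure. -/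
/-! Fix a part `S` of `π`. Sending a part `T` of `τ` to the unique point of `S ∩ T` is a bijection
`τ → S`: it is injective because the parts of `τ` are disjoint, and surjective because they
cover `X`. Hence `S.ncard = τ.ncard`; the other half is the same argument with the roles of
`π` and `τ` exchanged. -/

section

variable {X : Type*} {π τ : Set (Set X)}

theorem IsPartition.exists_mem_s5 (hτ : IsPartition τ) (x : X) : ∃ T ∈ τ, x ∈ T :=
  Set.mem_sUnion.mp (hτ.2.2.symm ▸ Set.mem_univ x)

theorem IsPartition.eq_of_mem_of_mem (hτ : IsPartition τ) {T T' : Set X} (hT : T ∈ τ)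
    (hT' : T' ∈ τ) {x : X} (hxT : x ∈ T) (hxT' : x ∈ T') : T = T' := by
  by_contra hne
  exact Set.disjoint_left.mp (hτ.2.1 T hT T' hT' hne) hxT hxT'

theorem Complementary.symm (hcomp : Complementary π τ) : Complementary τ π := by
  intro T hT S hS
  simpa only [Set.inter_comm] using hcomp S hS T hT

theorem Complementary.ncard_eq (hτ : IsPartition τ) (hcomp : Complementary π τ) {S : Set X}
    (hS : S ∈ π) : S.ncard = τ.ncard := by
  let point : ∀ T ∈ τ, X := fun T hT => (hcomp S hS T hT).exists.choose
  have point_mem (T : Set X) (hT : T ∈ τ) : point T hT ∈ S ∩ T :=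
    (hcomp S hS T hT).exists.choose_spec
  refine (Set.ncard_congr point (fun T hT => (point_mem T hT).1) ?_ ?_).symm
  · intro T T' hT hT' heq
    exact hτ.eq_of_mem_of_mem hT hT' (point_mem T hT).2 (heq ▸ (point_mem T' hT').2)
  · intro x hx
    obtain ⟨T, hT, hxT⟩ := hτ.exists_mem_s5 x
    exact ⟨T, hT, (hcomp S hS T hT).unique (point_mem T hT) ⟨hx, hxT⟩⟩

end

theorem complementary_partitions_uniform_general {X : Type*}
    (π τ : Set (Set X)) (hπ : IsPartition π) (hτ : IsPartition τ)
    (hcomp : Complementary π τ) :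
    (∀ S ∈ π, S.ncard = τ.ncard) ∧ (∀ T ∈ τ, T.ncard = π.ncard) :=
  ⟨fun _ hS => hcomp.ncard_eq hτ hS, fun _ hT => hcomp.symm.ncard_eq hπ hT⟩

/-- If `π` and `τ` are complementary partitions of a finite set, then every part of `π`
has cardinality equal to the number of parts of `τ` (so `π` is uniform), and symmetrically
every part of `τ` has cardinality equal to the number of parts of `π` (so `τ` is uniform).
Consequently a classical structure in `Rel` whose partition is not uniform has no
complementary classical structure. -/
theorem complementary_partitions_uniform {X : Type*} [Fintype X]
    (π τ : Set (Set X)) (hπ : IsPartition π) (hτ : IsPartition τ)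
    (hcomp : Complementary π τ) :
    (∀ S ∈ π, S.ncard = τ.ncard) ∧ (∀ T ∈ τ, T.ncard = π.ncard) :=
  complementary_partitions_uniform_general π τ hπ hτ hcomp
end

section
/- Let k ≥ 2 and let π₁, …, π_k be partitions of a finite set X that are pairwise complementary (πᵢ and πⱼ are complementary whenever i ≠ j), and suppose π₁ has exactly d parts. Then there exist k − 2 pairwise orthogonal Latin squares of order d. -/
/-- A Latin square of order `d`: every row and every column is a bijection. -/
def IsLatinSquare {d : ℕ} (L : Fin d → Fin d → Fin d) : Prop :=
  (∀ i, Function.Bijective fun j => L i j) ∧ (∀ j, Function.Bijective fun i => L i j)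

/-- Two Latin squares of order `d` are orthogonal if the map
`(i, j) ↦ (L i j, L' i j)` is injective. -/
def OrthogonalLS {d : ℕ} (L L' : Fin d → Fin d → Fin d) : Prop :=
  Function.Injective fun p : Fin d × Fin d => (L p.1 p.2, L' p.1 p.2)

/-!
For complementary partitions `π`, `τ`, sending `x` to its parts `(S, T)` is a bijection
`X ≃ π × τ`, so the points are the cells of a grid whose rows are the parts of `π₀` and whose
columns are the parts of `π₁`. Every further partition `πₐ` labels the cell of `x` with the part
of `πₐ` containing `x`; complementarity of `πₐ` with `π₀` and with `π₁` makes this labelling a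
Latin square, and complementarity of `πₐ` with `π_b` makes two such labellings orthogonal. All
the partitions have the same number of parts, since each part of a third partition meets every
part of `π` and of `τ` in exactly one point.
-/

open Function

namespace IsPartition

variable {X : Type*} {π : Set (Set X)}

theorem existsUnique_mem (hπ : IsPartition π) (x : X) : ∃! S, S ∈ π ∧ x ∈ S := by
  obtain ⟨S, hS, hxS⟩ := Set.mem_sUnion.mp (hπ.2.2 ▸ Set.mem_univ x)
  refine ⟨S, ⟨hS, hxS⟩, fun T ⟨hT, hxT⟩ => ?_⟩
  by_contra hTS
  exact Set.disjoint_left.mp (hπ.2.1 T hT S hS hTS) hxT hxS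

noncomputable def partOf (hπ : IsPartition π) (x : X) : π :=
  ⟨_, (hπ.existsUnique_mem x).exists.choose_spec.1⟩

theorem mem_partOf (hπ : IsPartition π) (x : X) : x ∈ (hπ.partOf x : Set X) :=
  (hπ.existsUnique_mem x).exists.choose_spec.2

theorem partOf_eq_of_mem (hπ : IsPartition π) {x : X} {S : Set X} (hS : S ∈ π) (hx : x ∈ S) :
    (hπ.partOf x : Set X) = S :=
  (hπ.existsUnique_mem x).unique ⟨(hπ.partOf x).2, hπ.mem_partOf x⟩ ⟨hS, hx⟩

theorem eq_empty [IsEmpty X] (hπ : IsPartition π) : π = ∅ :=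
  Set.eq_empty_of_forall_notMem fun S hS => (hπ.1 S hS).ne_empty (Set.eq_empty_of_isEmpty S)

theorem nonempty [Nonempty X] (hπ : IsPartition π) : π.Nonempty :=
  ⟨_, (hπ.partOf (Classical.arbitrary X)).2⟩

end IsPartition

namespace Complementary

variable {X : Type*} {π τ σ : Set (Set X)}

theorem bijective_partOf (hπ : IsPartition π) (hτ : IsPartition τ) (h : Complementary π τ) :
    Bijective fun x => (hπ.partOf x, hτ.partOf x) := by
  constructor
  · intro x y hxy
    obtain ⟨hP, hT⟩ := Prod.mk.inj hxy
    obtain ⟨z, -, hz⟩ := h _ (hπ.partOf x).2 _ (hτ.partOf x).2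
    have hy : y ∈ (hπ.partOf x : Set X) ∩ hτ.partOf x := by
      rw [hP, hT]
      exact ⟨hπ.mem_partOf y, hτ.mem_partOf y⟩
    exact (hz x ⟨hπ.mem_partOf x, hτ.mem_partOf x⟩).trans (hz y hy).symm
  · rintro ⟨⟨S, hS⟩, ⟨T, hT⟩⟩
    obtain ⟨z, ⟨hzS, hzT⟩, -⟩ := h S hS T hT
    exact ⟨z, Prod.ext (Subtype.ext (hπ.partOf_eq_of_mem hS hzS))
      (Subtype.ext (hτ.partOf_eq_of_mem hT hzT))⟩

theorem ncard_eq_of_mem (hπ : IsPartition π) (h : Complementary π τ) {T : Set X} (hT : T ∈ τ) :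
    T.ncard = π.ncard := by
  refine Set.ncard_congr (fun x _ => (hπ.partOf x : Set X)) (fun x _ => (hπ.partOf x).2)
    (fun x y hx hy hxy => ?_) (fun S hS => ?_)
  · obtain ⟨z, -, hz⟩ := h _ (hπ.partOf x).2 T hT
    have hyx : y ∈ (hπ.partOf x : Set X) := hxy ▸ hπ.mem_partOf y
    exact (hz x ⟨hπ.mem_partOf x, hx⟩).trans (hz y ⟨hyx, hy⟩).symm
  · obtain ⟨z, ⟨hzS, hzT⟩, -⟩ := h S hS T hT
    exact ⟨z, hzT, hπ.partOf_eq_of_mem hS hzS⟩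

theorem ncard_eq_s7 (hπ : IsPartition π) (hτ : IsPartition τ) (hσ : IsPartition σ)
    (hπσ : Complementary π σ) (hτσ : Complementary τ σ) : π.ncard = τ.ncard := by
  rcases isEmpty_or_nonempty X with hX | hX
  · rw [hπ.eq_empty, hτ.eq_empty]
  · obtain ⟨S, hS⟩ := hσ.nonempty
    rw [← hπσ.ncard_eq_of_mem hπ hS, hτσ.ncard_eq_of_mem hτ hS]

end Complementary

section SquareOf

variable {X : Type*} {d : ℕ} {f g : X → Fin d} (hfg : Bijective fun x => (f x, g x))

noncomputable def squareOf (h : X → Fin d) (i j : Fin d) : Fin d :=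
  h ((Equiv.ofBijective _ hfg).symm (i, j))

variable {hfg}

theorem isLatinSquare_squareOf {h : X → Fin d} (hfh : Injective fun x => (f x, h x))
    (hgh : Injective fun x => (g x, h x)) : IsLatinSquare (squareOf hfg h) := by
  set e := Equiv.ofBijective _ hfg
  constructor
  · refine fun i => Finite.injective_iff_bijective.mp fun j j' hjj' => ?_
    have hx : e.symm (i, j) = e.symm (i, j') :=
      hfh (Prod.ext ((congrArg Prod.fst (e.apply_symm_apply (i, j))).trans
        (congrArg Prod.fst (e.apply_symm_apply (i, j'))).symm) hjj')
    exact congrArg Prod.snd (e.symm.injective hx)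
  · refine fun j => Finite.injective_iff_bijective.mp fun i i' hii' => ?_
    have hx : e.symm (i, j) = e.symm (i', j) :=
      hgh (Prod.ext ((congrArg Prod.snd (e.apply_symm_apply (i, j))).trans
        (congrArg Prod.snd (e.apply_symm_apply (i', j))).symm) hii')
    exact congrArg Prod.fst (e.symm.injective hx)

theorem orthogonalLS_squareOf {h h' : X → Fin d} (hhh' : Injective fun x => (h x, h' x)) :
    OrthogonalLS (squareOf hfg h) (squareOf hfg h') :=
  hhh'.comp (Equiv.ofBijective _ hfg).symm.injective

end SquareOf

/-- From `k ≥ 2` pairwise complementary partitions of a finite set, the first having `d`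
parts, one can construct `k - 2` mutually orthogonal Latin squares of order `d`. -/
theorem mols_of_mutually_complementary_partitions {X : Type*} [Fintype X] {k d : ℕ}
    (hk : 2 ≤ k) (π : Fin k → Set (Set X))
    (hpart : ∀ i, IsPartition (π i))
    (hcomp : ∀ i j, i ≠ j → Complementary (π i) (π j))
    (hd : (π ⟨0, by omega⟩).ncard = d) :
    ∃ L : Fin (k - 2) → Fin d → Fin d → Fin d,
      (∀ i, IsLatinSquare (L i)) ∧ ∀ i j, i ≠ j → OrthogonalLS (L i) (L j) := by
  rcases Nat.lt_or_ge k 3 with hk_lt | hk3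
  · exact ⟨fun m => absurd m.2 (by omega), fun m => absurd m.2 (by omega),
      fun m => absurd m.2 (by omega)⟩
  let i₀ : Fin k := ⟨0, by omega⟩
  let i₁ : Fin k := ⟨1, by omega⟩
  let idx (m : Fin (k - 2)) : Fin k := ⟨m + 2, by omega⟩
  have hcard (a : Fin k) : (π a).ncard = d := by
    obtain ⟨b, hba, hb₀⟩ := Fin.exists_ne_and_ne_of_two_lt a i₀ (by omega)
    rw [← hd, (hcomp a b hba.symm).ncard_eq_s7 (hpart a) (hpart i₀) (hpart b) (hcomp i₀ b hb₀.symm)]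
  let label (a : Fin k) (x : X) : Fin d :=
    Finite.equivFinOfCardEq (hcard a) ((hpart a).partOf x)
  have hlabel {a b : Fin k} (hab : a ≠ b) : Bijective fun x => (label a x, label b x) :=
    (Equiv.prodCongr _ _).bijective.comp ((hcomp a b hab).bijective_partOf (hpart a) (hpart b))
  have h₀₁ : i₀ ≠ i₁ := Fin.ne_of_val_ne (by simp [i₀, i₁])
  refine ⟨fun m => squareOf (hlabel h₀₁) (label (idx m)),
    fun m => isLatinSquare_squareOf ?_ ?_, fun m m' hmm' => orthogonalLS_squareOf ?_⟩
  · exact (hlabel (Fin.ne_of_val_ne (by simp [i₀, idx]))).injective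
  · exact (hlabel (Fin.ne_of_val_ne (by simp [i₁, idx]))).injective
  · exact (hlabel (Fin.ne_of_val_ne fun h => hmm' (Fin.ext (by simpa [idx] using h)))).injective
end

section
/- Let d be a prime power. Then there exist d + 1 pairwise complementary partitions of a set with d² elements. (If d is a prime power, there are d + 1 mutually complementary classical structures on d² elements in Rel.) -/
open Function

def fibers {X Y : Type*} (f : X → Y) : Set (Set X) :=
  Set.range fun y => f ⁻¹' {y}

lemma isPartition_fibers {X Y : Type*} {f : X → Y} (hf : Surjective f) :
    IsPartition (fibers f) := by
  refine ⟨?_, ?_, ?_⟩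
  · rintro _ ⟨y, rfl⟩
    exact hf y
  · rintro _ ⟨y, rfl⟩ _ ⟨y', rfl⟩ hne
    exact (Set.disjoint_singleton.mpr fun h => hne (congrArg (f ⁻¹' {·}) h)).preimage f
  · exact Set.eq_univ_of_forall fun x => ⟨_, ⟨f x, rfl⟩, rfl⟩

lemma complementary_fibers {X Y Z : Type*} {f : X → Y} {g : X → Z}
    (h : Bijective fun x => (f x, g x)) : Complementary (fibers f) (fibers g) := by
  rintro _ ⟨a, rfl⟩ _ ⟨b, rfl⟩
  simpa [Prod.ext_iff] using (bijective_iff_existsUnique _).mp h (a, b)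

/-- `intercept (some m)` is constant exactly on the lines of slope `m`, and `intercept none`
on the vertical lines. -/
def intercept {F : Type*} [Field F] : Option F → F × F → F
  | none, p => p.1
  | some m, p => p.2 - m * p.1

section intercept

variable {F : Type*} [Field F]

lemma intercept_surjective (o : Option F) : Surjective (intercept o) := by
  cases o with
  | none => exact fun c => ⟨(c, 0), rfl⟩
  | some m => exact fun b => ⟨(0, b), by simp [intercept]⟩

lemma intercept_none_some_bijective (m : F) :
    Bijective fun p => (intercept none p, intercept (some m) p) := by
  refine bijective_iff_has_inverse.mpr ⟨fun q => (q.1, q.2 + m * q.1), ?_, ?_⟩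
  · rintro ⟨x, y⟩
    simp [intercept]
  · rintro ⟨a, b⟩
    simp [intercept]

lemma intercept_some_some_bijective {m m' : F} (h : m ≠ m') :
    Bijective fun p => (intercept (some m) p, intercept (some m') p) := by
  have hm : m - m' ≠ 0 := sub_ne_zero.mpr h
  refine bijective_iff_has_inverse.mpr
    ⟨fun q => ((q.2 - q.1) / (m - m'), q.1 + m * ((q.2 - q.1) / (m - m'))), ?_, ?_⟩
  · rintro ⟨x, y⟩
    have hx : (m * x - m' * x) / (m - m') = x := by
      rw [div_eq_iff hm]
      ring
    simp [intercept, hx]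
  · rintro ⟨a, b⟩
    simp only [intercept, Prod.mk.injEq]
    constructor
    · ring
    · field_simp
      ring

lemma intercept_pair_bijective {o o' : Option F} (h : o ≠ o') :
    Bijective fun p => (intercept o p, intercept o' p) := by
  match o, o' with
  | none, none => exact absurd rfl h
  | none, some m => exact intercept_none_some_bijective m
  | some m, none => exact Prod.swap_bijective.comp (intercept_none_some_bijective m)
  | some m, some m' => exact intercept_some_some_bijective (fun hm => h (hm ▸ rfl))

end intercept

/-- If `d` is a prime power then there exist `d + 1` pairwise complementary partitions of
a set with `d²` elements; i.e. there are `d + 1` mutually complementary classical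
structures on `d²` elements in `Rel`. -/
theorem mutually_complementary_partitions_of_prime_power {d : ℕ}
    (hd : ∃ p n : ℕ, Nat.Prime p ∧ 1 ≤ n ∧ d = p ^ n) :
    ∃ π : Fin (d + 1) → Set (Set (Fin (d ^ 2))),
      (∀ i, IsPartition (π i)) ∧ ∀ i j, i ≠ j → Complementary (π i) (π j) := by
  obtain ⟨p, n, hp, hn, rfl⟩ := hd
  have : Fact p.Prime := ⟨hp⟩
  have hcard : Nat.card (GaloisField p n) = p ^ n := GaloisField.card p n (by omega)
  let e : Fin ((p ^ n) ^ 2) ≃ GaloisField p n × GaloisField p n :=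
    (Finite.equivFinOfCardEq (by rw [Nat.card_prod, hcard, sq])).symm
  let σ : Fin (p ^ n + 1) ≃ Option (GaloisField p n) :=
    (Finite.equivFinOfCardEq (by rw [Finite.card_option, hcard])).symm
  exact ⟨fun i => fibers (intercept (σ i) ∘ e),
    fun i => isPartition_fibers ((intercept_surjective _).comp e.surjective),
    fun i j hij => complementary_fibers ((intercept_pair_bijective (σ.injective.ne hij)).comp
      e.bijective)⟩
end

section
/- The map Φ from the direct product group Π i, G i to the permutation group of X = Σ i, G i defined by Φ(u)⟨i, g⟩ = ⟨i, (u i) * g⟩ is an injective group homomorphism, and a permutation of X lies in the image of Φ if and only if it is the bijection Λ(P) associated to some unbiased point P, i.e., the bijection x ↦ (the unique y with ∃ z ∈ P, δ y (x, z)) for some transversal P of the fibers. Hence the maps Λ(P) for unbiased points P form, under composition, a group isomorphic to the direct product of the groups G i. -/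
/-- The group homomorphism `Φ` from `Π i, G i` to the permutations of `Σ i, G i`
sending `u` to the permutation `⟨i, g⟩ ↦ ⟨i, u i * g⟩`. -/
def Phi {ι : Type*} (G : ι → Type*) [∀ i, CommGroup (G i)] :
    (∀ i, G i) →* Equiv.Perm (Σ i, G i) where
  toFun u := Equiv.sigmaCongrRight fun i => Equiv.mulLeft (u i)
  map_one' := by
    ext ⟨i, g⟩
    · rfl
    · apply heq_of_eq
      change 1 * g = g
      exact one_mul g
  map_mul' u v := by
    ext ⟨i, g⟩
    · rfl
    · apply heq_of_eq
      change u i * v i * g = u i * (v i * g)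
      exact mul_assoc _ _ _

section

variable {ι : Type*}

def IsTransversal (G : ι → Type*) (P : Set (Σ i, G i)) : Prop :=
  ∀ i, ∃! g : G i, (⟨i, g⟩ : Σ i, G i) ∈ P

variable {G : ι → Type*}

def sectionGraph (u : ∀ i, G i) : Set (Σ i, G i) := {x | x.2 = u x.1}

theorem isTransversal_iff_exists_eq_sectionGraph (P : Set (Σ i, G i)) :
    IsTransversal G P ↔ ∃ u : ∀ i, G i, P = sectionGraph u := by
  constructor
  · intro hP
    choose u hu using hP
    refine ⟨u, Set.ext fun ⟨i, g⟩ => ⟨fun hg => (hu i).2 g hg, ?_⟩⟩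
    intro hg
    rw [show g = u i from hg]
    exact (hu i).1
  · rintro ⟨u, rfl⟩ i
    exact ⟨u i, rfl, fun _ hg => hg⟩

variable [∀ i, CommGroup (G i)]

variable (G) in
theorem Phi_apply (u : ∀ i, G i) (x : Σ i, G i) : Phi G u x = ⟨x.1, u x.1 * x.2⟩ := rfl

variable (G) in
theorem Phi_injective : Function.Injective (Phi G) := by
  intro u v h
  funext i
  simpa [Phi_apply] using congrArg (fun σ : Equiv.Perm (Σ i, G i) => σ ⟨i, 1⟩) h

theorem relDelta_mk_iff {i : ι} (g : G i) (y z : Σ i, G i) :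
    relDelta y (⟨i, g⟩, z) ↔ ∃ l : G i, z = ⟨i, l⟩ ∧ y = ⟨i, g * l⟩ := by
  obtain ⟨j, k⟩ := y
  constructor
  · rintro ⟨h, l, hx, rfl, hk⟩
    obtain ⟨rfl, hg⟩ := Sigma.mk.inj_iff.1 hx
    cases hg
    exact ⟨l, rfl, congrArg _ hk⟩
  · rintro ⟨l, rfl, hy⟩
    obtain ⟨rfl, hk⟩ := Sigma.mk.inj_iff.1 hy
    cases hk
    exact ⟨g, l, rfl, rfl, rfl⟩

theorem exists_mem_sectionGraph_relDelta_iff (u : ∀ i, G i) (x y : Σ i, G i) :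
    (∃ z ∈ sectionGraph u, relDelta y (x, z)) ↔ Phi G u x = y := by
  obtain ⟨i, g⟩ := x
  simp only [relDelta_mk_iff, Phi_apply]
  constructor
  · rintro ⟨_, hl, l, rfl, rfl⟩
    rw [show l = u i from hl, mul_comm]
  · rintro rfl
    exact ⟨⟨i, u i⟩, rfl, u i, rfl, by rw [mul_comm]⟩

end

theorem phi_injective_image_unbiased_general {ι : Type*}
    (G : ι → Type*) [∀ i, CommGroup (G i)] :
    (∀ (u : ∀ i, G i) (x : Σ i, G i), Phi G u x = ⟨x.1, u x.1 * x.2⟩) ∧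
    Function.Injective (Phi G) ∧
    (∀ σ : Equiv.Perm (Σ i, G i),
        σ ∈ (Phi G).range ↔
          ∃ P : Set (Σ i, G i),
            (∀ i, ∃! g : G i, (⟨i, g⟩ : Σ i, G i) ∈ P) ∧
            ∀ x y : Σ i, G i, σ x = y ↔ ∃ z ∈ P, relDelta y (x, z)) ∧
    Nonempty ((∀ i, G i) ≃* (Phi G).range) := by
  refine ⟨Phi_apply G, Phi_injective G, fun σ => ⟨?_, ?_⟩,
    ⟨MonoidHom.ofInjective (Phi_injective G)⟩⟩
  · rintro ⟨u, rfl⟩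
    exact ⟨sectionGraph u, (isTransversal_iff_exists_eq_sectionGraph _).2 ⟨u, rfl⟩,
      fun x y => (exists_mem_sectionGraph_relDelta_iff u x y).symm⟩
  · rintro ⟨P, hP, hσ⟩
    obtain ⟨u, rfl⟩ := (isTransversal_iff_exists_eq_sectionGraph P).1 hP
    exact ⟨u, Equiv.ext fun x =>
      ((hσ x _).2 ((exists_mem_sectionGraph_relDelta_iff u x _).2 rfl)).symm⟩

/-- `Φ : Π i, G i → Perm (Σ i, G i)`, `Φ(u)⟨i, g⟩ = ⟨i, u i * g⟩`, is an injective group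
homomorphism whose image consists exactly of the bijections `Λ(P)` associated to the
unbiased points `P` (the transversals of the fibers), namely the maps
`x ↦ (the unique y with ∃ z ∈ P, δ y (x, z))`.  Hence the maps `Λ(P)` for unbiased
points `P` form, under composition, a group isomorphic to `Π i, G i`. -/
theorem phi_injective_image_unbiased {ι : Type*} [Fintype ι] [Nonempty ι]
    (G : ι → Type*) [∀ i, Fintype (G i)] [∀ i, CommGroup (G i)] :
    (∀ (u : ∀ i, G i) (x : Σ i, G i), Phi G u x = ⟨x.1, u x.1 * x.2⟩) ∧
    Function.Injective (Phi G) ∧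
    (∀ σ : Equiv.Perm (Σ i, G i),
        σ ∈ (Phi G).range ↔
          ∃ P : Set (Σ i, G i),
            (∀ i, ∃! g : G i, (⟨i, g⟩ : Σ i, G i) ∈ P) ∧
            ∀ x y : Σ i, G i, σ x = y ↔ ∃ z ∈ P, relDelta y (x, z)) ∧
    Nonempty ((∀ i, G i) ≃* (Phi G).range) :=
  phi_injective_image_unbiased_general G
end
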